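/- For every word-representable graph G, l(G ∘ K₂) ≤ 2·l(G) + κ_G, where l denotes the minimum length of a word-representant, κ_G is the size of a maximum clique of G, and G ∘ K₂ is the rooted product of G with K₂. -/

import Mathlib

/-!
Take a shortest word `w` representing `G`, turn each occurrence of `v` into the root `(v, 0)` and
insert pendants `(v, 1)` so that the letters over `v` alternate and the last root of `v` is
immediately flanked by two pendants. The roots still read `w`, and a pendant now alternates with
no letter but its root. Only letters occurring once in `w` cost an extra pendant, so the new word
has length `2|w| + s` with `s` the number of such letters; any two of them alternate in `w`, so
they form a clique and `s ≤ κ_G`.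
-/
open SimpleGraph

variable {V : Type*}

/-- Two distinct letters `x` and `y` alternate in a word `w` if the subsequence of `w`
consisting of all occurrences of `x` and `y` is strictly alternating. -/
def Alternates [DecidableEq V] (x y : V) (w : List V) : Prop :=
  (w.filter (fun z => decide (z = x ∨ z = y))).Chain' (· ≠ ·)

/-- A word `w` represents the graph `G` if it contains every vertex at least once and
two distinct vertices are adjacent iff they alternate in `w`. -/
def Represents [DecidableEq V] (G : SimpleGraph V) (w : List V) : Prop :=
  (∀ v : V, v ∈ w) ∧ ∀ x y : V, x ≠ y → (G.Adj x y ↔ Alternates x y w)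

/-- A graph is word-representable if some word represents it. -/
def WordRepresentable [DecidableEq V] (G : SimpleGraph V) : Prop :=
  ∃ w : List V, Represents G w

/-- `l(G)`: the minimum length of a word-representant of `G`. -/
noncomputable def reprLen [DecidableEq V] (G : SimpleGraph V) : ℕ :=
  sInf {n | ∃ w : List V, Represents G w ∧ w.length = n}

/-- The rooted product `G ∘ H` with root `r : U`: copies of `H` indexed by `V(G)`,
with each vertex `u` of `G` identified with the root of the `u`-th copy. -/
def rootedProd {U : Type*} (G : SimpleGraph V) (H : SimpleGraph U) (r : U) :
    SimpleGraph (V × U) where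
  Adj p q := (p.1 = q.1 ∧ H.Adj p.2 q.2) ∨ (p.2 = r ∧ q.2 = r ∧ G.Adj p.1 q.1)
  symm := by
    constructor
    intro p q h
    rcases h with ⟨h1, h2⟩ | ⟨h1, h2, h3⟩
    · exact Or.inl ⟨h1.symm, h2.symm⟩
    · exact Or.inr ⟨h2, h1, h3.symm⟩
  loopless := by
    constructor
    intro p h
    rcases h with ⟨_, h2⟩ | ⟨_, _, h3⟩
    · exact h2.ne rfl
    · exact h3.ne rfl

section RootedProduct

variable {U : Type*} {G : SimpleGraph V} {H : SimpleGraph U} {r : U}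

lemma rootedProd_adj_root {a b : V} : (rootedProd G H r).Adj (a, r) (b, r) ↔ G.Adj a b := by
  simp [rootedProd]

lemma rootedProd_adj_of_snd_ne {p q : V × U} (hp : p.2 ≠ r) :
    (rootedProd G H r).Adj p q ↔ p.1 = q.1 ∧ H.Adj p.2 q.2 := by
  simp [rootedProd, hp]

lemma rootedProd_top_adj_pendant {a : V} {q : V × Fin 2} :
    (rootedProd G (⊤ : SimpleGraph (Fin 2)) 0).Adj (a, 1) q ↔ q = (a, 0) := by
  obtain ⟨b, j⟩ := q
  rw [rootedProd_adj_of_snd_ne (by simp)]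
  fin_cases j <;> simp [eq_comm]

end RootedProduct

section WordRepresentation

variable [DecidableEq V]

lemma alternates_comm {x y : V} {w : List V} : Alternates x y w ↔ Alternates y x w := by
  simp only [Alternates, or_comm]

lemma alternates_of_count_eq_one {x y : V} {w : List V} (hx : w.count x = 1)
    (hy : w.count y = 1) : Alternates x y w := by
  refine List.Pairwise.isChain (List.nodup_iff_count_le_one.2 fun z => ?_)
  by_cases hz : z = x ∨ z = y
  · rw [List.count_filter (by simpa using hz)]
    rcases hz with rfl | rfl <;> omega
  · rw [List.count_eq_zero_of_not_mem fun hm => hz (by simpa using List.of_mem_filter hm)]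
    omega

lemma Represents.isClique_count_eq_one {G : SimpleGraph V} {w : List V} (hw : Represents G w) :
    G.IsClique {v | w.count v = 1} :=
  fun _ hx _ hy hxy => (hw.2 _ _ hxy).2 (alternates_of_count_eq_one hx hy)

lemma reprLen_le {G : SimpleGraph V} {w : List V} (hw : Represents G w) :
    reprLen G ≤ w.length :=
  Nat.sInf_le ⟨w, hw, rfl⟩

lemma WordRepresentable.exists_represents_length_eq {G : SimpleGraph V}
    (h : WordRepresentable G) : ∃ w, Represents G w ∧ w.length = reprLen G :=
  let ⟨w, hw⟩ := h
  Nat.sInf_mem (s := {n | ∃ w : List V, Represents G w ∧ w.length = n})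
    ⟨w.length, w, hw, rfl⟩

end WordRepresentation

section PendantWord

variable [DecidableEq V]

def pendantBlock (seen : List V) (v : V) (rest : List V) : List (V × Fin 2) :=
  (if v ∈ seen ∨ v ∉ rest then [(v, 1)] else []) ++
    (v, 0) :: (if v ∉ rest then [(v, 1)] else [])

/-- Every occurrence of `v` in `w` becomes the root `(v, 0)`, preceded by the pendant `(v, 1)`
unless it is the first occurrence (`seen` lists the letters already read); the last occurrence is
moreover followed by `(v, 1)`. -/
def pendantWord (seen : List V) : List V → List (V × Fin 2)
  | [] => []
  | v :: rest => pendantBlock seen v rest ++ pendantWord (v :: seen) rest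

variable {seen w : List V}

lemma fst_eq_of_mem_pendantBlock {v : V} {rest : List V} {z : V × Fin 2}
    (hz : z ∈ pendantBlock seen v rest) : z.1 = v := by
  unfold pendantBlock at hz
  split_ifs at hz <;> simp at hz <;> rcases hz with rfl | rfl | rfl <;> rfl

lemma fst_mem_of_mem_pendantWord {z : V × Fin 2} (hz : z ∈ pendantWord seen w) : z.1 ∈ w := by
  induction w generalizing seen with
  | nil => simp [pendantWord] at hz
  | cons v rest ih =>
    rcases List.mem_append.1 hz with hz | hz
    · exact fst_eq_of_mem_pendantBlock hz ▸ List.mem_cons_self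
    · exact List.mem_cons_of_mem _ (ih hz)

lemma mk_mem_pendantWord {v : V} (i : Fin 2) (hv : v ∈ w) : (v, i) ∈ pendantWord seen w := by
  induction w generalizing seen with
  | nil => simp at hv
  | cons y rest ih =>
    by_cases hr : v ∈ rest
    · exact List.mem_append_right _ (ih hr)
    · obtain rfl : v = y := by simpa [hr] using hv
      refine List.mem_append_left _ ?_
      fin_cases i <;> simp [pendantBlock, hr]

lemma filter_fst_pendantWord_of_not_mem {v : V} (hv : v ∉ w) :
    (pendantWord seen w).filter (fun z => z.1 = v) = [] :=
  List.filter_eq_nil_iff.2 fun _ hz hzv =>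
    hv <| of_decide_eq_true hzv ▸ fst_mem_of_mem_pendantWord hz

lemma filter_root_pendantBlock (p : V → Bool) (v : V) (rest : List V) :
    (pendantBlock seen v rest).filter (fun z => z.2 = 0 && p z.1) =
      if p v then [(v, 0)] else [] := by
  unfold pendantBlock
  split_ifs <;> simp [*]

lemma filter_root_pendantWord (p : V → Bool) :
    (pendantWord seen w).filter (fun z => z.2 = 0 && p z.1) = (w.filter p).map (·, 0) := by
  induction w generalizing seen with
  | nil => rfl
  | cons v rest ih =>
    rw [pendantWord, List.filter_append, ih, filter_root_pendantBlock, List.filter_cons]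
    split <;> rfl

lemma filter_fst_pendantBlock_of_ne {a v : V} {rest : List V} (h : v ≠ a) :
    (pendantBlock seen v rest).filter (fun z => z.1 = a) = [] :=
  List.filter_eq_nil_iff.2 fun _ hz hza =>
    h <| fst_eq_of_mem_pendantBlock hz ▸ of_decide_eq_true hza

lemma isChain_root_cons_filter_fst_pendantWord {a : V} (ha : a ∈ seen) :
    ((a, 0) :: (pendantWord seen w).filter (fun z => z.1 = a)).IsChain (· ≠ ·) := by
  induction w generalizing seen with
  | nil => simp [pendantWord]
  | cons v rest ih =>
    rw [pendantWord, List.filter_append]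
    by_cases hva : v = a
    · subst hva
      by_cases hr : v ∈ rest
      · simpa [pendantBlock, ha, hr] using ih (List.mem_cons_of_mem v ha)
      · simp [pendantBlock, ha, hr, filter_fst_pendantWord_of_not_mem hr]
    · rw [filter_fst_pendantBlock_of_ne hva, List.nil_append]
      exact ih (List.mem_cons_of_mem v ha)

lemma isChain_filter_fst_pendantWord {a : V} (ha : a ∉ seen) :
    ((pendantWord seen w).filter (fun z => z.1 = a)).IsChain (· ≠ ·) := by
  induction w generalizing seen with
  | nil => simp [pendantWord]
  | cons v rest ih =>
    rw [pendantWord, List.filter_append]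
    by_cases hva : v = a
    · subst hva
      by_cases hr : v ∈ rest
      · simpa [pendantBlock, ha, hr] using
          isChain_root_cons_filter_fst_pendantWord (w := rest) List.mem_cons_self
      · simp [pendantBlock, ha, hr, filter_fst_pendantWord_of_not_mem hr]
    · rw [filter_fst_pendantBlock_of_ne hva, List.nil_append]
      exact ih (by simp [ha, Ne.symm hva])

lemma not_isChain_filter_pendantWord {P : V × Fin 2 → Bool} {v : V} (h1 : P (v, 1))
    (h0 : P (v, 0) = false) (hv : v ∈ w) :
    ¬ ((pendantWord seen w).filter P).IsChain (· ≠ ·) := by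
  induction w generalizing seen with
  | nil => simp at hv
  | cons y rest ih =>
    rw [pendantWord, List.filter_append]
    by_cases hr : v ∈ rest
    · exact fun h => ih hr h.right_of_append
    · obtain rfl : v = y := by simpa [hr] using hv
      simp [pendantBlock, hr, h1, h0]

lemma length_pendantBlock (v : V) (rest : List V) :
    (pendantBlock seen v rest).length =
      (if v ∈ seen ∨ v ∉ rest then 1 else 0) + 1 + (if v ∉ rest then 1 else 0) := by
  unfold pendantBlock
  split_ifs <;> rfl

lemma length_pendantWord :
    (pendantWord seen w).length =
      2 * w.length + (w.toFinset.filter (fun u => u ∈ seen ∨ w.count u = 1)).card := by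
  induction w generalizing seen with
  | nil => rfl
  | cons v rest ih =>
    rw [pendantWord, List.length_append, ih, List.length_cons, length_pendantBlock]
    set S := (v :: rest).toFinset.filter (fun u => u ∈ seen ∨ (v :: rest).count u = 1)
    set S' := rest.toFinset.filter (fun u => u ∈ v :: seen ∨ rest.count u = 1)
    have hcount : ∀ u, u ≠ v → (v :: rest).count u = rest.count u := fun u hu =>
      List.count_cons_of_ne (Ne.symm hu)
    by_cases hr : v ∈ rest
    · have hv : rest.count v ≠ 0 := (List.count_pos_iff.2 hr).ne'
      by_cases hs : v ∈ seen
      · have : S' = S := by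
          ext u
          by_cases hu : u = v
          · subst hu; simp [S, S', hr, hs]
          · simp [S, S', hu, hcount u hu]
        simp only [hr, hs, this, true_or, not_true, if_true, if_false]
        omega
      · have : S' = insert v S := by
          ext u
          by_cases hu : u = v
          · subst hu; simp [S, S', hr, hv]
          · simp [S, S', hu, hcount u hu]
        have hvS : v ∉ S := by simp [S, hs, hv]
        simp only [hr, hs, this, Finset.card_insert_of_notMem hvS, or_false, not_true, if_false]
        omega
    · have : S = insert v S' := by
        ext u
        by_cases hu : u = v
        · subst hu; simp [S, S', hr, List.count_eq_zero_of_not_mem hr]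
        · simp [S, S', hu, hcount u hu]
      have hvS' : v ∉ S' := by simp [S', hr]
      simp only [hr, this, Finset.card_insert_of_notMem hvS', not_false_eq_true, or_true, if_true]
      omega

lemma alternates_root_pendantWord {a b : V} :
    Alternates (a, 0) (b, 0) (pendantWord seen w) ↔ Alternates a b w := by
  have hroots : (pendantWord seen w).filter (fun z => decide (z = (a, 0) ∨ z = (b, 0))) =
      (pendantWord seen w).filter (fun z => z.2 = 0 && decide (z.1 = a ∨ z.1 = b)) :=
    List.filter_congr fun ⟨c, k⟩ _ => by fin_cases k <;> simp
  rw [Alternates, Alternates, List.Chain', List.Chain', hroots,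
    filter_root_pendantWord (fun c => decide (c = a ∨ c = b)), List.isChain_map]
  simp

lemma alternates_pendant_pendantWord {a : V} {q : V × Fin 2} (ha : a ∈ w) (hq : q ≠ (a, 1)) :
    Alternates (a, 1) q (pendantWord [] w) ↔ q = (a, 0) := by
  constructor
  · intro h
    by_contra hq0
    exact not_isChain_filter_pendantWord (v := a) (by simp) (by simp [Ne.symm hq0]) ha h
  · rintro rfl
    have hfiber : (pendantWord [] w).filter (fun z => decide (z = (a, 1) ∨ z = (a, 0))) =
        (pendantWord [] w).filter (fun z => z.1 = a) :=
      List.filter_congr fun ⟨c, k⟩ _ => by fin_cases k <;> simp [and_comm]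
    rw [Alternates, hfiber]
    exact isChain_filter_fst_pendantWord List.not_mem_nil

theorem Represents.rootedProd_pendantWord {G : SimpleGraph V} (hw : Represents G w) :
    Represents (rootedProd G (⊤ : SimpleGraph (Fin 2)) 0) (pendantWord [] w) := by
  refine ⟨fun ⟨v, i⟩ => mk_mem_pendantWord i (hw.1 v), ?_⟩
  have pendant : ∀ a q, q ≠ (a, 1) →
      ((rootedProd G ⊤ 0).Adj (a, 1) q ↔ Alternates (a, 1) q (pendantWord [] w)) :=
    fun a _ hq => by rw [rootedProd_top_adj_pendant, alternates_pendant_pendantWord (hw.1 a) hq]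
  rintro ⟨a, i⟩ ⟨b, j⟩ hne
  match i, j, hne with
  | 0, 0, hne =>
    rw [rootedProd_adj_root, alternates_root_pendantWord]
    exact hw.2 a b (by rintro rfl; exact hne rfl)
  | 0, 1, hne =>
    rw [adj_comm, alternates_comm]
    exact pendant b _ hne
  | 1, _, hne => exact pendant a _ hne.symm

end PendantWord

theorem stmt17 [Fintype V] [DecidableEq V] (G : SimpleGraph V)
    (h : WordRepresentable G) :
    reprLen (rootedProd G (⊤ : SimpleGraph (Fin 2)) 0) ≤ 2 * reprLen G + G.cliqueNum := by
  obtain ⟨w, hw, hlen⟩ := h.exists_represents_length_eq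
  have hclique : G.IsClique ↑(w.toFinset.filter (fun u => w.count u = 1)) := by
    simpa using hw.isClique_count_eq_one.subset (by intro u; simp)
  calc reprLen (rootedProd G ⊤ 0)
      ≤ (pendantWord [] w).length := reprLen_le hw.rootedProd_pendantWord
    _ = 2 * w.length + (w.toFinset.filter (fun u => w.count u = 1)).card := by
      simp [length_pendantWord]
    _ ≤ 2 * reprLen G + G.cliqueNum := by
      rw [hlen]
      gcongr
      exact hclique.card_le_cliqueNum
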